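/- Let p ∈ ℝ⁴, and define g(z) := p·Q(z) and h(z) := (p¹ − i p²) − (p⁰ + p³)(x − iy) (so h = ∂_z g and ∂_z² g = 0). On the open set {z ∈ ℂ : g(z) ≠ 0}, the function G := g·ln|g| satisfies ∂_z² G = h²/g, i.e. ∂ₓₓG − ∂_yyG − 2i ∂ₓ∂_yG = 4 h²/g. (This is the identity ∂_z²((q·p) ln|q·p|) = (∂_z q·p)²/(q·p) used to express hard supermomenta through the density (q·p) ln|q·p|.) -/

import Mathlib

noncomputable section

/-- The null embedding of the celestial sphere into the light-cone of Minkowski space. -/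
def Q (z : ℂ) : Fin 4 → ℝ :=
  ![-1 - z.re ^ 2 - z.im ^ 2, 2 * z.re, 2 * z.im, 1 - z.re ^ 2 - z.im ^ 2]

/-- The contraction `p·Q(z) = Σ_μ pᵘ Qᵘ(z)`. -/
def dotQ (p : Fin 4 → ℝ) (z : ℂ) : ℝ := ∑ μ : Fin 4, p μ * Q z μ

/-- The partial derivative `∂ₓ` of a complex-valued function on `ℂ ≅ ℝ²`. -/
def pdx (f : ℂ → ℂ) (z : ℂ) : ℂ := fderiv ℝ f z 1

/-- The partial derivative `∂_y` of a complex-valued function on `ℂ ≅ ℝ²`. -/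
def pdy (f : ℂ → ℂ) (z : ℂ) : ℂ := fderiv ℝ f z Complex.I

/-- The Wirtinger derivative `∂_z = ½(∂ₓ − i ∂_y)`. -/
def pz (f : ℂ → ℂ) (z : ℂ) : ℂ := (1 / 2) * (pdx f z - Complex.I * pdy f z)

/-- `h(z) = ∂_z(p·Q)(z) = (p¹ − i p²) − (p⁰ + p³)(x − iy)`. -/
def hfun (p : Fin 4 → ℝ) (z : ℂ) : ℂ :=
  ((p 1 : ℂ) - (p 2 : ℂ) * Complex.I) - ((p 0 : ℂ) + (p 3 : ℂ)) * (starRingEnd ℂ z)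

lemma dotQ_eq (p : Fin 4 → ℝ) (w : ℂ) :
    dotQ p w = (p 3 - p 0) + 2 * p 1 * w.re + 2 * p 2 * w.im
      - (p 0 + p 3) * (w.re * w.re + w.im * w.im) := by
  simp [dotQ, Q, Fin.sum_univ_four]; ring

lemma hasFDerivAt_dotQ (p : Fin 4 → ℝ) (w : ℂ) :
    HasFDerivAt (fun v => dotQ p v)
      ((2 * p 1 - 2 * (p 0 + p 3) * w.re) • Complex.reCLM
        + (2 * p 2 - 2 * (p 0 + p 3) * w.im) • Complex.imCLM) w := by
  have hre : HasFDerivAt (fun v : ℂ => v.re) Complex.reCLM w := Complex.reCLM.hasFDerivAt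
  have him : HasFDerivAt (fun v : ℂ => v.im) Complex.imCLM w := Complex.imCLM.hasFDerivAt
  have H := (((hasFDerivAt_const (p 3 - p 0) w).add (hre.const_mul (2 * p 1))).add
      (him.const_mul (2 * p 2))).sub
      (((hre.mul hre).add (him.mul him)).const_mul (p 0 + p 3))
  have hfe : (fun v : ℂ => dotQ p v)
      = fun v : ℂ => (p 3 - p 0) + 2 * p 1 * v.re + 2 * p 2 * v.im
        - (p 0 + p 3) * (v.re * v.re + v.im * v.im) := by
    funext v; rw [dotQ_eq]
  rw [hfe]
  refine H.congr_fderiv ?_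
  ext v
  simp
  ring

lemma key1 (p : Fin 4 → ℝ) (w : ℂ) (hw : dotQ p w ≠ 0) :
    pz (fun v => ((dotQ p v * Real.log |dotQ p v| : ℝ) : ℂ)) w
      = hfun p w * (1 + (Real.log (dotQ p w) : ℂ)) := by
  have Hg := hasFDerivAt_dotQ p w
  have Hlog := (Real.hasDerivAt_log hw).comp_hasFDerivAt w Hg
  have Hmul := Hg.mul Hlog
  have HF := (Complex.ofRealCLM.hasFDerivAt (x := dotQ p w * Real.log (dotQ p w))).comp w Hmul
  have hfeq : (fun v : ℂ => ((dotQ p v * Real.log |dotQ p v| : ℝ) : ℂ))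
      = fun v => Complex.ofRealCLM (dotQ p v * Real.log (dotQ p v)) := by
    funext v; simp [Real.log_abs]
  have HF' : HasFDerivAt (fun v : ℂ => ((dotQ p v * Real.log |dotQ p v| : ℝ) : ℂ))
      (Complex.ofRealCLM.comp (dotQ p w • (dotQ p w)⁻¹ •
          ((2 * p 1 - 2 * (p 0 + p 3) * w.re) • Complex.reCLM
            + (2 * p 2 - 2 * (p 0 + p 3) * w.im) • Complex.imCLM)
        + Real.log (dotQ p w) •
          ((2 * p 1 - 2 * (p 0 + p 3) * w.re) • Complex.reCLM
            + (2 * p 2 - 2 * (p 0 + p 3) * w.im) • Complex.imCLM))) w := by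
    rw [hfeq]; exact HF
  rw [pz, pdx, pdy, HF'.fderiv]
  simp only [ContinuousLinearMap.coe_comp', Function.comp_apply, ContinuousLinearMap.add_apply,
    ContinuousLinearMap.smul_apply, Complex.reCLM_apply, Complex.imCLM_apply,
    Complex.ofRealCLM_apply, Complex.one_re, Complex.one_im, Complex.I_re, Complex.I_im,
    smul_eq_mul]
  rw [hfun]
  push_cast
  rw [Complex.ext_iff]
  constructor <;>
  · simp
    field_simp <;> ring

/-- On the open set where `g := p·Q ≠ 0`, the function `G = g ln|g|` satisfies
`∂_z² G = h²/g` (the identity `∂_z²((q·p) ln|q·p|) = (∂_z q·p)²/(q·p)` expressing hard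
supermomenta through the density `(q·p) ln|q·p|`). -/
theorem dz_sq_log_density (p : Fin 4 → ℝ) (z : ℂ) (hz : dotQ p z ≠ 0) :
    pz (pz (fun w => ((dotQ p w * Real.log |dotQ p w| : ℝ) : ℂ))) z
      = (hfun p z) ^ 2 / ((dotQ p z : ℝ) : ℂ) := by
  -- eventual equality with the explicit first derivative
  have hcont : Continuous fun w : ℂ => dotQ p w := by
    simp only [dotQ_eq]; fun_prop
  have hne : ∀ᶠ w in nhds z, dotQ p w ≠ 0 := hcont.continuousAt.eventually_ne hz
  have hEv : pz (fun w => ((dotQ p w * Real.log |dotQ p w| : ℝ) : ℂ))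
      =ᶠ[nhds z] fun w => hfun p w * (1 + (Real.log (dotQ p w) : ℂ)) :=
    hne.mono fun w hw => key1 p w hw
  -- derivative of hfun
  have Hconj : HasFDerivAt (fun w : ℂ => (starRingEnd ℂ) w)
      (Complex.conjCLE.toContinuousLinearMap) z := Complex.conjCLE.hasFDerivAt
  have Hh : HasFDerivAt (fun w => hfun p w)
      (-(((p 0 : ℂ) + (p 3 : ℂ)) • Complex.conjCLE.toContinuousLinearMap)) z := by
    have := (Hconj.const_mul ((p 0 : ℂ) + (p 3 : ℂ))).const_sub
      ((p 1 : ℂ) - (p 2 : ℂ) * Complex.I)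
    simpa [hfun] using this
  -- derivative of 1 + log ∘ g (as ℂ-valued)
  have Hg := hasFDerivAt_dotQ p z
  have Hlog := (Real.hasDerivAt_log hz).comp_hasFDerivAt z Hg
  have Hψ := ((Complex.ofRealCLM.hasFDerivAt (x := Real.log (dotQ p z))).comp z Hlog).const_add 1
  have Hψ' : HasFDerivAt (fun w : ℂ => 1 + (Real.log (dotQ p w) : ℂ))
      (Complex.ofRealCLM.comp ((dotQ p z)⁻¹ •
        ((2 * p 1 - 2 * (p 0 + p 3) * z.re) • Complex.reCLM
          + (2 * p 2 - 2 * (p 0 + p 3) * z.im) • Complex.imCLM))) z := Hψ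
  have Hφ : HasFDerivAt (fun w => hfun p w * (1 + (Real.log (dotQ p w) : ℂ))) _ z := Hh.mul Hψ'
  -- pass to second derivative
  rw [pz, pdx, pdy, hEv.fderiv_eq, Hφ.fderiv]
  simp only [ContinuousLinearMap.add_apply, ContinuousLinearMap.smul_apply,
    ContinuousLinearMap.neg_apply, ContinuousLinearMap.coe_comp', Function.comp_apply,
    ContinuousLinearEquiv.coe_coe, Complex.conjCLE_apply, Complex.reCLM_apply,
    Complex.imCLM_apply, Complex.ofRealCLM_apply, Complex.one_re, Complex.one_im,
    Complex.I_re, Complex.I_im, map_one, Complex.conj_I, smul_eq_mul]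
  rw [eq_div_iff (by exact_mod_cast hz : ((dotQ p z : ℝ) : ℂ) ≠ 0), hfun]
  rw [show (starRingEnd ℂ) z = (z.re : ℂ) - (z.im : ℂ) * Complex.I by
    rw [Complex.ext_iff]; simp]
  push_cast
  have hzc : ((dotQ p z : ℝ) : ℂ) ≠ 0 := by exact_mod_cast hz
  field_simp
  ring_nf
  simp only [Complex.I_sq]
  ring
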